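/- arXiv:1804.02206 — 3 statements merged into one kernel-verified Lean document; each statement's English description precedes it below -/
import Mathlib

section
/- Let q > 2 and let u : ℝ/ℤ → ℝⁿ be an embedded, regular C¹ curve with bil(u) < ∞ and [u']_{W^{1-1/q,q}} < ∞. Then the tangent-point functional satisfies TP(u) ≤ (1/q) · (bil u)^{2q} · ‖u'‖_{L^∞}^q · [u']_{W^{1-1/q,q}}^q. -/
open MeasureTheory Set Filter
open scoped RealInnerProductSpace ENNReal Topology

noncomputable section

/-- The distance on the circle `ℝ/ℤ` between the points represented by `x` and `y`. -/
def circDist (x y : ℝ) : ℝ := ‖((x - y : ℝ) : AddCircle (1 : ℝ))‖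

/-- The representative of `z` modulo `1` lying in `(-1/2, 1/2]`. -/
def wrap (z : ℝ) : ℝ := 1 / 2 - Int.fract (1 / 2 - z)

/-- Squared wedge norm `|a ∧ b|² = |a|²|b|² - ⟨a,b⟩²`. -/
def wedgeSq {n : ℕ} (a b : EuclideanSpace ℝ (Fin n)) : ℝ :=
  ‖a‖ ^ 2 * ‖b‖ ^ 2 - ⟪a, b⟫ ^ 2

/-- Wedge inner product `⟨a∧b, c∧d⟩ = ⟨a,c⟩⟨b,d⟩ - ⟨a,d⟩⟨b,c⟩`. -/
def wedgeInner {n : ℕ} (a b c d : EuclideanSpace ℝ (Fin n)) : ℝ :=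
  ⟪a, c⟫ * ⟪b, d⟫ - ⟪a, d⟫ * ⟪b, c⟫

/-- Fundamental domain for double integrals over `(ℝ/ℤ)²`. -/
def unitSq : Set (ℝ × ℝ) := Ioc (0 : ℝ) 1 ×ˢ Ioc (0 : ℝ) 1

/-- The tangent-point functional `TP` (extended-real-valued). -/
def TPe {n : ℕ} (q : ℝ) (u : ℝ → EuclideanSpace ℝ (Fin n)) : ℝ≥0∞ :=
  ENNReal.ofReal (1 / q) *
    ∫⁻ p in unitSq, ENNReal.ofReal
      (wedgeSq (deriv u p.2) (u p.1 - u p.2) ^ (q / 2) / ‖u p.1 - u p.2‖ ^ (2 * q))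

/-- The tangent-point functional `TP` (real-valued). -/
def TPr {n : ℕ} (q : ℝ) (u : ℝ → EuclideanSpace ℝ (Fin n)) : ℝ := (TPe q u).toReal

/-- The `q`-th power of the Sobolev–Slobodeckii seminorm `[f]_{W^{s,q}}` on `ℝ/ℤ`. -/
def sobSemPow {n : ℕ} (s q : ℝ) (f : ℝ → EuclideanSpace ℝ (Fin n)) : ℝ≥0∞ :=
  ∫⁻ p in unitSq, ENNReal.ofReal (‖f p.1 - f p.2‖ ^ q / circDist p.1 p.2 ^ (1 + s * q))

/-- The `W^{s,q}`-norm `‖f‖_{L^q} + [f]_{W^{s,q}}`. -/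
def Wnorm {n : ℕ} (s q : ℝ) (f : ℝ → EuclideanSpace ℝ (Fin n)) : ℝ :=
  (∫ x in Ioc (0 : ℝ) 1, ‖f x‖ ^ q) ^ (1 / q) + (sobSemPow s q f).toReal ^ (1 / q)

/-- The bi-Lipschitz constant `bil(u) = sup_{x ≢ y} |x-y|_{ℝ/ℤ}/|u(x)-u(y)|`. -/
def bil {n : ℕ} (u : ℝ → EuclideanSpace ℝ (Fin n)) : ℝ≥0∞ :=
  ⨆ (x : ℝ) (y : ℝ) (_ : circDist x y ≠ 0),
    ENNReal.ofReal (circDist x y) / ENNReal.ofReal ‖u x - u y‖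

/-- The `L^∞`-norm of the derivative of `u`. -/
def linfD {n : ℕ} (u : ℝ → EuclideanSpace ℝ (Fin n)) : ℝ≥0∞ :=
  ⨆ x : ℝ, (‖deriv u x‖₊ : ℝ≥0∞)

/-- A periodic curve is embedded if it is injective on the circle `ℝ/ℤ`. -/
def Embedded {n : ℕ} (u : ℝ → EuclideanSpace ℝ (Fin n)) : Prop :=
  ∀ x y : ℝ, u x = u y → ((x : AddCircle (1 : ℝ)) = (y : AddCircle (1 : ℝ)))

/-- A curve is regular if `min_{ℝ/ℤ} |u'| > 0`. -/
def Regular {n : ℕ} (u : ℝ → EuclideanSpace ℝ (Fin n)) : Prop :=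
  0 < ⨅ x : ℝ, ‖deriv u x‖

/-- Orthogonal projection of `b` onto the orthogonal complement of `ℝ a`. -/
def projPerp {n : ℕ} (a b : EuclideanSpace ℝ (Fin n)) : EuclideanSpace ℝ (Fin n) :=
  b - (⟪b, a⟫ / ‖a‖ ^ 2) • a

/-- The classical tangent-point functional (extended-real-valued). -/
def TPcle {n : ℕ} (q : ℝ) (u : ℝ → EuclideanSpace ℝ (Fin n)) : ℝ≥0∞ :=
  ENNReal.ofReal (1 / q) *
    ∫⁻ p in unitSq, ENNReal.ofReal
      (‖projPerp (deriv u p.2) (u p.1 - u p.2)‖ ^ q / ‖u p.1 - u p.2‖ ^ (2 * q) *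
        (‖deriv u p.1‖ * ‖deriv u p.2‖))

/-- The integrand of the functional `M(u; v, w)`. -/
def Mintegrand {n : ℕ} (q : ℝ) (u v w : ℝ → EuclideanSpace ℝ (Fin n)) (p : ℝ × ℝ) : ℝ :=
  wedgeSq (deriv u p.2) (u p.1 - u p.2) ^ ((q - 2) / 2) / ‖u p.1 - u p.2‖ ^ (2 * q) *
    wedgeInner (deriv u p.2) (u p.1 - u p.2) (deriv v p.2)
      (w p.1 - w p.2 - wrap (p.1 - p.2) • deriv w p.2)

/-- The functional `M(u; v, w)` appearing in the first variation of `TP`. -/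
def Mfun {n : ℕ} (q : ℝ) (u v w : ℝ → EuclideanSpace ℝ (Fin n)) : ℝ :=
  ∫ p in unitSq, Mintegrand q u v w p

/-- The integrand of the functional `A(u; v, w)`. -/
def Aintegrand {n : ℕ} (q : ℝ) (u v w : ℝ → EuclideanSpace ℝ (Fin n)) (p : ℝ × ℝ) : ℝ :=
  wedgeSq (deriv u p.2) (u p.1 - u p.2) ^ (q / 2) / ‖u p.1 - u p.2‖ ^ (2 * q + 2) *
    ⟪v p.1 - v p.2, w p.1 - w p.2⟫

/-- The functional `A(u; v, w)` appearing in the first variation of `TP`. -/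
def Afun {n : ℕ} (q : ℝ) (u v w : ℝ → EuclideanSpace ℝ (Fin n)) : ℝ :=
  ∫ p in unitSq, Aintegrand q u v w p

/-- The first variation `δTP(u)[w] = M(u;u,w) + M(u;w,u) - 2A(u;u,w)`. -/
def deltaTP {n : ℕ} (q : ℝ) (u w : ℝ → EuclideanSpace ℝ (Fin n)) : ℝ :=
  Mfun q u u w + Mfun q u w u - 2 * Afun q u u w

/-- The `H²` inner product on periodic curves. -/
def H2inner (v w : ℝ → EuclideanSpace ℝ (Fin 3)) : ℝ :=
  ∫ x in Ioc (0 : ℝ) 1,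
    (⟪v x, w x⟫ + ⟪deriv v x, deriv w x⟫ + ⟪deriv (deriv v) x, deriv (deriv w) x⟫)

/-- The total energy `E(u) = (κ/2)∫|u''|² + ρ TP(u)`. -/
def energyE (κ ρ q : ℝ) (u : ℝ → EuclideanSpace ℝ (Fin 3)) : ℝ :=
  κ / 2 * (∫ x in Ioc (0 : ℝ) 1, ‖deriv (deriv u) x‖ ^ 2) + ρ * TPr q u

/-!
Fix `y` and let `y + wrap (x - y)` be the representative of `x` nearest to `y`, at distance
`d = |x - y|_{ℝ/ℤ}`. Since `|a ∧ b| ≤ |a| |b - c a|` for every `c`, Taylor's formula and Hölder's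
inequality bound the numerator `|u'(y) ∧ (u(x) - u(y))|^q` by
`‖u'‖_∞^q d^{q-1} ∫_{[y, y + wrap (x - y)]} |u'(t) - u'(y)|^q dt`,
while `|u(x) - u(y)| ≥ d / bil(u)`. Integrating in `x`, Hardy's inequality
`∫_0^a s^{-q-1} ∫_0^s h ≤ q⁻¹ ∫_0^a s^{-q} h` (on both sides of `y`) turns this into
`bil(u)^{2q} ‖u'‖_∞^q ∫ |u'(x) - u'(y)|^q / d^q dx`, and `q = 1 + (1 - 1/q) q` is the
Sobolev–Slobodeckiĭ exponent of `u'`.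
-/

open scoped Interval

lemma wrap_mem_Ioc (z : ℝ) : wrap z ∈ Ioc (-2⁻¹ : ℝ) 2⁻¹ := by
  have := Int.fract_nonneg (1 / 2 - z)
  have := Int.fract_lt_one (1 / 2 - z)
  constructor <;> simp only [wrap] <;> linarith

lemma wrap_eq_self {z : ℝ} (hz : z ∈ Ioc (-2⁻¹ : ℝ) 2⁻¹) : wrap z = z := by
  have : Int.fract (1 / 2 - z) = 1 / 2 - z :=
    Int.fract_eq_self.2 ⟨by linarith [hz.2], by linarith [hz.1]⟩
  rw [wrap, this]; ring

lemma wrap_add_one (z : ℝ) : wrap (z + 1) = wrap z := by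
  rw [wrap, wrap, show 1 / 2 - (z + 1) = 1 / 2 - z - 1 by ring, Int.fract_sub_one]

lemma wrap_eq_sub_int (z : ℝ) : wrap z = z - (-⌊1 / 2 - z⌋ : ℤ) * 1 := by
  rw [wrap, ← Int.self_sub_floor]; push_cast; ring

lemma Function.Periodic.apply_wrap {β : Type*} {f : ℝ → β} (hf : Function.Periodic f 1)
    (z : ℝ) : f (wrap z) = f z := by
  rw [wrap_eq_sub_int, hf.sub_int_mul_eq]

lemma circDist_eq_abs_wrap (x y : ℝ) : circDist x y = |wrap (x - y)| := by
  have hcoe : ((wrap (x - y) : ℝ) : AddCircle (1 : ℝ)) = ((x - y : ℝ) : AddCircle (1 : ℝ)) :=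
    Function.Periodic.apply_wrap (f := fun t : ℝ => (t : AddCircle (1 : ℝ)))
      (AddCircle.coe_add_period 1) (x - y)
  have hw := wrap_mem_Ioc (x - y)
  rw [circDist, ← hcoe, AddCircle.norm_coe_eq_abs_iff (p := (1 : ℝ)) one_ne_zero, abs_le]
  constructor <;> linarith [hw.1, hw.2]

lemma circDist_add_one_left (x y : ℝ) : circDist (x + 1) y = circDist x y := by
  rw [circDist_eq_abs_wrap, circDist_eq_abs_wrap, add_sub_right_comm, wrap_add_one]

lemma Function.Periodic.apply_add_wrap_sub {β : Type*} {f : ℝ → β}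
    (hf : Function.Periodic f 1) (x y : ℝ) : f (y + wrap (x - y)) = f x := by
  simpa using (hf.const_add y).apply_wrap (x - y)

lemma Function.Periodic.eq_of_circDist_eq_zero {β : Type*} {f : ℝ → β}
    (hf : Function.Periodic f 1) {x y : ℝ} (hd : circDist x y = 0) : f x = f y := by
  rw [circDist_eq_abs_wrap, abs_eq_zero] at hd
  rw [← hf.apply_add_wrap_sub x y, hd, add_zero]

lemma continuous_circDist : Continuous fun p : ℝ × ℝ => circDist p.1 p.2 :=
  ((AddCircle.continuous_mk' 1).comp (continuous_fst.sub continuous_snd)).norm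

lemma preimage_const_add_uIoc (y a b : ℝ) : (y + ·) ⁻¹' Ι a b = Ι (a - y) (b - y) := by
  simp only [uIoc, preimage_const_add_Ioc, min_sub_sub_right, max_sub_sub_right]

lemma setLIntegral_comp_const_add (f : ℝ → ℝ≥0∞) (y : ℝ) (S : Set ℝ) :
    ∫⁻ x in (y + ·) ⁻¹' S, f (y + x) = ∫⁻ x in S, f x :=
  (measurePreserving_add_left volume y).setLIntegral_comp_preimage_emb
    (Homeomorph.addLeft y).measurableEmbedding f S

lemma Function.Periodic.setLIntegral_Ioc_add_eq {f : ℝ → ℝ≥0∞} {T : ℝ} (hf : Function.Periodic f T)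
    (hT : 0 < T) (t s : ℝ) : ∫⁻ x in Ioc t (t + T), f x = ∫⁻ x in Ioc s (s + T), f x :=
  (isAddFundamentalDomain_Ioc hT t).setLIntegral_eq (isAddFundamentalDomain_Ioc hT s) f
    hf.map_vadd_zmultiples

lemma Function.Periodic.setLIntegral_Ioc_zero_one_eq {f : ℝ → ℝ≥0∞} (hf : Function.Periodic f 1)
    (y : ℝ) : ∫⁻ x in Ioc 0 1, f x = ∫⁻ s in Ioc (-2⁻¹) 2⁻¹, f (y + s) := by
  calc ∫⁻ x in Ioc 0 1, f x = ∫⁻ x in Ioc (y - 2⁻¹) (y - 2⁻¹ + 1), f x := by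
        simpa using hf.setLIntegral_Ioc_add_eq one_pos 0 (y - 2⁻¹)
    _ = ∫⁻ s in Ioc (-2⁻¹) 2⁻¹, f (y + s) := by
        rw [← setLIntegral_comp_const_add f y, preimage_const_add_Ioc]
        congr 2
        norm_num [sub_sub_cancel_left, add_sub_right_comm]

lemma Function.Periodic.deriv {E : Type*} [NormedAddCommGroup E] [NormedSpace ℝ E] {f : ℝ → E}
    {c : ℝ} (hf : Function.Periodic f c) : Function.Periodic (_root_.deriv f) c := fun x => by
  rw [← deriv_comp_add_const, funext hf]

section Wedge

variable {n : ℕ}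

lemma wedgeSq_nonneg (a b : EuclideanSpace ℝ (Fin n)) : 0 ≤ wedgeSq a b := by
  have := abs_real_inner_le_norm a b
  have := abs_nonneg ⟪a, b⟫
  rw [wedgeSq, ← mul_pow, sub_nonneg, ← sq_abs]
  gcongr

lemma wedgeSq_sub_smul_right (a b : EuclideanSpace ℝ (Fin n)) (c : ℝ) :
    wedgeSq a (b - c • a) = wedgeSq a b := by
  simp only [wedgeSq, norm_sub_sq_real, inner_sub_right, inner_smul_right, real_inner_comm a b,
    norm_smul, real_inner_self_eq_norm_sq, Real.norm_eq_abs, mul_pow, sq_abs]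
  ring

lemma wedgeSq_rpow_le (a b : EuclideanSpace ℝ (Fin n)) (c : ℝ) {q : ℝ} (hq : 0 ≤ q) :
    wedgeSq a b ^ (q / 2) ≤ (‖a‖ * ‖b - c • a‖) ^ q := by
  have hle : wedgeSq a b ≤ (‖a‖ * ‖b - c • a‖) ^ (2 : ℝ) := by
    rw [← wedgeSq_sub_smul_right a b c, wedgeSq, Real.rpow_two, mul_pow]
    exact sub_le_self _ (sq_nonneg _)
  calc wedgeSq a b ^ (q / 2) ≤ ((‖a‖ * ‖b - c • a‖) ^ (2 : ℝ)) ^ (q / 2) := by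
        gcongr; exact wedgeSq_nonneg a b
    _ = (‖a‖ * ‖b - c • a‖) ^ q := by
        rw [← Real.rpow_mul (by positivity)]; ring_nf

end Wedge

lemma rpow_lintegral_le_mul_lintegral_rpow {α : Type*} [MeasurableSpace α] (μ : Measure α)
    {f : α → ℝ≥0∞} (hf : AEMeasurable f μ) {q : ℝ} (hq : 1 < q) :
    (∫⁻ t, f t ∂μ) ^ q ≤ μ univ ^ (q - 1) * ∫⁻ t, f t ^ q ∂μ := by
  have hpq : q.HolderConjugate (q / (q - 1)) := Real.HolderConjugate.conjExponent hq
  have hHolder := ENNReal.lintegral_mul_le_Lp_mul_Lq μ hpq hf aemeasurable_const (g := fun _ => 1)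
  simp only [Pi.mul_apply, mul_one, ENNReal.one_rpow, lintegral_const, one_mul] at hHolder
  calc (∫⁻ t, f t ∂μ) ^ q
      ≤ ((∫⁻ t, f t ^ q ∂μ) ^ (1 / q) * μ univ ^ (1 / (q / (q - 1)))) ^ q := by gcongr
    _ = μ univ ^ (q - 1) * ∫⁻ t, f t ^ q ∂μ := by
        rw [ENNReal.mul_rpow_of_nonneg _ _ (by positivity), ← ENNReal.rpow_mul, ← ENNReal.rpow_mul,
          one_div_mul_cancel (by positivity), ENNReal.rpow_one, mul_comm]
        congr 2
        field_simp

section Taylor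

variable {E : Type*} [NormedAddCommGroup E] [NormedSpace ℝ E] [CompleteSpace E] {u : ℝ → E}

lemma enorm_sub_sub_smul_deriv_le (hu : ContDiff ℝ 1 u) (x y : ℝ) :
    ‖u x - u y - (x - y) • deriv u y‖ₑ ≤ ∫⁻ t in Ι y x, ‖deriv u t - deriv u y‖ₑ := by
  have hu' : Continuous (deriv u) := hu.continuous_deriv le_rfl
  have hFTC : u x - u y - (x - y) • deriv u y = ∫ t in y..x, (deriv u t - deriv u y) := by
    rw [intervalIntegral.integral_sub (hu'.intervalIntegrable y x) intervalIntegrable_const,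
      intervalIntegral.integral_const,
      intervalIntegral.integral_deriv_eq_sub (fun t _ => hu.differentiable one_ne_zero t)
        (hu'.intervalIntegrable y x)]
  rw [hFTC, ← ofReal_norm, intervalIntegral.norm_integral_eq_norm_integral_uIoc, ofReal_norm]
  exact enorm_integral_le_lintegral_enorm _

lemma enorm_sub_sub_smul_deriv_rpow_le (hu : ContDiff ℝ 1 u) {q : ℝ} (hq : 1 < q) (x y : ℝ) :
    ‖u x - u y - (x - y) • deriv u y‖ₑ ^ q ≤
      ‖x - y‖ₑ ^ (q - 1) * ∫⁻ t in Ι y x, ‖deriv u t - deriv u y‖ₑ ^ q := by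
  have hmeas : AEMeasurable (fun t => ‖deriv u t - deriv u y‖ₑ) (volume.restrict (Ι y x)) :=
    ((hu.continuous_deriv le_rfl).sub continuous_const).enorm.aemeasurable
  calc ‖u x - u y - (x - y) • deriv u y‖ₑ ^ q
      ≤ (∫⁻ t in Ι y x, ‖deriv u t - deriv u y‖ₑ) ^ q := by
        gcongr; exact enorm_sub_sub_smul_deriv_le hu x y
    _ ≤ _ := by
        refine (rpow_lintegral_le_mul_lintegral_rpow _ hmeas hq).trans_eq ?_
        rw [Measure.restrict_apply_univ, Real.volume_uIoc, Real.enorm_eq_ofReal_abs]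

end Taylor

section Hardy

variable {q : ℝ}

lemma lintegral_Ioi_rpow_neg_sub_one (hq : 0 < q) {τ : ℝ} (hτ : 0 < τ) :
    ∫⁻ s in Ioi τ, ENNReal.ofReal s ^ (-(q + 1)) =
      ENNReal.ofReal q⁻¹ * ENNReal.ofReal τ ^ (-q) := by
  have hint : IntegrableOn (fun s : ℝ => s ^ (-(q + 1))) (Ioi τ) :=
    integrableOn_Ioi_rpow_of_lt (by linarith) hτ
  rw [setLIntegral_congr_fun (g := fun s => ENNReal.ofReal (s ^ (-(q + 1)))) measurableSet_Ioi
      fun s hs => ENNReal.ofReal_rpow_of_pos (hτ.trans hs),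
    ← ofReal_integral_eq_lintegral_ofReal hint
      (ae_restrict_of_forall_mem measurableSet_Ioi fun s hs => Real.rpow_nonneg (hτ.trans hs).le _),
    integral_Ioi_rpow_of_lt (by linarith) hτ, ENNReal.ofReal_rpow_of_pos hτ,
    ← ENNReal.ofReal_mul (by positivity)]
  congr 1
  rw [show -(q + 1) + 1 = -q by ring]
  field_simp

lemma lintegral_Ioi_rpow_mul_lintegral_Ioc (hq : 0 < q) {h : ℝ → ℝ≥0∞} (hh : Measurable h) :
    ∫⁻ s in Ioi 0, ENNReal.ofReal s ^ (-(q + 1)) * ∫⁻ τ in Ioc 0 s, h τ =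
      ENNReal.ofReal q⁻¹ * ∫⁻ τ in Ioi 0, ENNReal.ofReal τ ^ (-q) * h τ := by
  set G : ℝ → ℝ → ℝ≥0∞ := fun s τ =>
    (Iic s).indicator (fun τ => ENNReal.ofReal s ^ (-(q + 1)) * h τ) τ
  have hG : Measurable (Function.uncurry G) :=
    Measurable.indicator (s := {p : ℝ × ℝ | p.2 ≤ p.1})
      (f := fun p => ENNReal.ofReal p.1 ^ (-(q + 1)) * h p.2) (by fun_prop)
      (measurableSet_le measurable_snd measurable_fst)
  calc ∫⁻ s in Ioi 0, ENNReal.ofReal s ^ (-(q + 1)) * ∫⁻ τ in Ioc 0 s, h τ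
      = ∫⁻ s in Ioi 0, ∫⁻ τ in Ioi 0, G s τ := by
        refine setLIntegral_congr_fun measurableSet_Ioi fun s _ => ?_
        rw [lintegral_indicator measurableSet_Iic, Measure.restrict_restrict measurableSet_Iic,
          Iic_inter_Ioi, lintegral_const_mul _ hh]
    _ = ∫⁻ τ in Ioi 0, ∫⁻ s in Ioi 0, G s τ := lintegral_lintegral_swap hG.aemeasurable
    _ = ∫⁻ τ in Ioi 0, ENNReal.ofReal q⁻¹ * (ENNReal.ofReal τ ^ (-q) * h τ) := by
        refine setLIntegral_congr_fun measurableSet_Ioi fun τ (hτ : 0 < τ) => ?_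
        have hGτ : (fun s => G s τ) =
            (Ici τ).indicator fun s => ENNReal.ofReal s ^ (-(q + 1)) * h τ := by
          ext s; simp only [G, indicator_apply, mem_Iic, mem_Ici]
        rw [hGτ, lintegral_indicator measurableSet_Ici, Measure.restrict_restrict measurableSet_Ici,
          inter_eq_left.2 (Ici_subset_Ioi.2 hτ), setLIntegral_congr Ioi_ae_eq_Ici.symm,
          lintegral_mul_const _ (ENNReal.measurable_ofReal.pow_const _),
          lintegral_Ioi_rpow_neg_sub_one hq hτ, mul_assoc]
    _ = _ := lintegral_const_mul _ ((ENNReal.measurable_ofReal.pow_const _).mul hh)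

lemma lintegral_Ioc_rpow_mul_lintegral_Ioc_le (hq : 0 < q) {h : ℝ → ℝ≥0∞} (hh : Measurable h)
    (a : ℝ) :
    ∫⁻ s in Ioc 0 a, ENNReal.ofReal s ^ (-(q + 1)) * ∫⁻ τ in Ioc 0 s, h τ ≤
      ENNReal.ofReal q⁻¹ * ∫⁻ τ in Ioc 0 a, ENNReal.ofReal τ ^ (-q) * h τ := by
  set g := (Ioc 0 a).indicator h
  calc ∫⁻ s in Ioc 0 a, ENNReal.ofReal s ^ (-(q + 1)) * ∫⁻ τ in Ioc 0 s, h τ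
      = ∫⁻ s in Ioc 0 a, ENNReal.ofReal s ^ (-(q + 1)) * ∫⁻ τ in Ioc 0 s, g τ := by
        refine setLIntegral_congr_fun measurableSet_Ioc fun s hs => ?_
        rw [setLIntegral_congr_fun measurableSet_Ioc fun τ hτ =>
          indicator_of_mem (Ioc_subset_Ioc_right hs.2 hτ) h]
    _ ≤ ∫⁻ s in Ioi 0, ENNReal.ofReal s ^ (-(q + 1)) * ∫⁻ τ in Ioc 0 s, g τ :=
        lintegral_mono_set Ioc_subset_Ioi_self
    _ = ENNReal.ofReal q⁻¹ * ∫⁻ τ in Ioi 0, ENNReal.ofReal τ ^ (-q) * g τ :=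
        lintegral_Ioi_rpow_mul_lintegral_Ioc hq (hh.indicator measurableSet_Ioc)
    _ = ENNReal.ofReal q⁻¹ * ∫⁻ τ in Ioc 0 a, ENNReal.ofReal τ ^ (-q) * h τ := by
        simp only [g, ← indicator_mul_right _ (fun τ => ENNReal.ofReal τ ^ (-q))]
        rw [lintegral_indicator measurableSet_Ioc, Measure.restrict_restrict measurableSet_Ioc,
          inter_eq_left.2 Ioc_subset_Ioi_self]

lemma setLIntegral_Ioc_neg_zero (a : ℝ) (f : ℝ → ℝ≥0∞) :
    ∫⁻ x in Ioc (-a) 0, f x = ∫⁻ x in Ioc 0 a, f (-x) := by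
  have hneg := (Measure.measurePreserving_neg (volume : Measure ℝ)).setLIntegral_comp_preimage_emb
    (Homeomorph.neg ℝ).measurableEmbedding f (Ioc (-a) 0)
  rw [← hneg, neg_preimage, neg_Ioc, neg_zero, neg_neg]
  exact setLIntegral_congr Ico_ae_eq_Ioc

lemma lintegral_abs_rpow_mul_lintegral_uIoc_le (hq : 0 < q) {h : ℝ → ℝ≥0∞} (hh : Measurable h)
    {a : ℝ} (ha : 0 ≤ a) :
    ∫⁻ s in Ioc (-a) a, ENNReal.ofReal |s| ^ (-(q + 1)) * ∫⁻ τ in Ι 0 s, h τ ≤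
      ENNReal.ofReal q⁻¹ * ∫⁻ s in Ioc (-a) a, ENNReal.ofReal |s| ^ (-q) * h s := by
  rw [← Ioc_union_Ioc_eq_Ioc (neg_nonpos.2 ha) ha,
    lintegral_union measurableSet_Ioc (Ioc_disjoint_Ioc_of_le le_rfl),
    lintegral_union measurableSet_Ioc (Ioc_disjoint_Ioc_of_le le_rfl), mul_add,
    setLIntegral_Ioc_neg_zero a, setLIntegral_Ioc_neg_zero a]
  gcongr ?_ + ?_
  · calc ∫⁻ s in Ioc 0 a, ENNReal.ofReal |-s| ^ (-(q + 1)) * ∫⁻ τ in Ι 0 (-s), h τ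
        = ∫⁻ s in Ioc 0 a, ENNReal.ofReal s ^ (-(q + 1)) * ∫⁻ τ in Ioc 0 s, h (-τ) := by
          refine setLIntegral_congr_fun measurableSet_Ioc fun s hs => ?_
          rw [abs_neg, abs_of_pos hs.1, uIoc_of_ge (neg_nonpos.2 hs.1.le),
            setLIntegral_Ioc_neg_zero]
      _ ≤ ENNReal.ofReal q⁻¹ * ∫⁻ s in Ioc 0 a, ENNReal.ofReal s ^ (-q) * h (-s) :=
          lintegral_Ioc_rpow_mul_lintegral_Ioc_le hq (hh.comp measurable_neg) a
      _ = ENNReal.ofReal q⁻¹ * ∫⁻ s in Ioc 0 a, ENNReal.ofReal |-s| ^ (-q) * h (-s) := by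
          congr 1
          refine setLIntegral_congr_fun measurableSet_Ioc fun s hs => ?_
          rw [abs_neg, abs_of_pos hs.1]
  · calc ∫⁻ s in Ioc 0 a, ENNReal.ofReal |s| ^ (-(q + 1)) * ∫⁻ τ in Ι 0 s, h τ
        = ∫⁻ s in Ioc 0 a, ENNReal.ofReal s ^ (-(q + 1)) * ∫⁻ τ in Ioc 0 s, h τ := by
          refine setLIntegral_congr_fun measurableSet_Ioc fun s hs => ?_
          rw [abs_of_pos hs.1, uIoc_of_le hs.1.le]
      _ ≤ ENNReal.ofReal q⁻¹ * ∫⁻ s in Ioc 0 a, ENNReal.ofReal s ^ (-q) * h s :=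
          lintegral_Ioc_rpow_mul_lintegral_Ioc_le hq hh a
      _ = ENNReal.ofReal q⁻¹ * ∫⁻ s in Ioc 0 a, ENNReal.ofReal |s| ^ (-q) * h s := by
          congr 1
          refine setLIntegral_congr_fun measurableSet_Ioc fun s hs => ?_
          rw [abs_of_pos hs.1]

lemma lintegral_circDist_rpow_mul_lintegral_le (hq : 0 < q) {h : ℝ → ℝ≥0∞}
    (hh : Measurable h) (hper : Function.Periodic h 1) (y : ℝ) :
    ∫⁻ x in Ioc 0 1, ENNReal.ofReal (circDist x y) ^ (-(q + 1)) *
        ∫⁻ t in Ι y (y + wrap (x - y)), h t ≤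
      ENNReal.ofReal q⁻¹ * ∫⁻ x in Ioc 0 1, ENNReal.ofReal (circDist x y) ^ (-q) * h x := by
  have hΦ : Function.Periodic (fun x => ENNReal.ofReal (circDist x y) ^ (-(q + 1)) *
      ∫⁻ t in Ι y (y + wrap (x - y)), h t) 1 := fun x => by
    simp only [circDist_add_one_left, add_sub_right_comm, wrap_add_one]
  have hΨ : Function.Periodic (fun x => ENNReal.ofReal (circDist x y) ^ (-q) * h x) 1 :=
    fun x => by simp only [circDist_add_one_left, hper x]
  have hdist : ∀ s ∈ Ioc (-2⁻¹ : ℝ) 2⁻¹, circDist (y + s) y = |s| := fun s hs => by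
    rw [circDist_eq_abs_wrap, add_sub_cancel_left, wrap_eq_self hs]
  rw [hΦ.setLIntegral_Ioc_zero_one_eq y, hΨ.setLIntegral_Ioc_zero_one_eq y]
  calc ∫⁻ s in Ioc (-2⁻¹) 2⁻¹, ENNReal.ofReal (circDist (y + s) y) ^ (-(q + 1)) *
        ∫⁻ t in Ι y (y + wrap (y + s - y)), h t
      = ∫⁻ s in Ioc (-2⁻¹) 2⁻¹, ENNReal.ofReal |s| ^ (-(q + 1)) * ∫⁻ τ in Ι 0 s, h (y + τ) := by
        refine setLIntegral_congr_fun measurableSet_Ioc fun s hs => ?_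
        rw [hdist s hs, add_sub_cancel_left, wrap_eq_self hs, ← setLIntegral_comp_const_add h y,
          preimage_const_add_uIoc, sub_self, add_sub_cancel_left]
    _ ≤ ENNReal.ofReal q⁻¹ * ∫⁻ s in Ioc (-2⁻¹) 2⁻¹, ENNReal.ofReal |s| ^ (-q) * h (y + s) :=
        lintegral_abs_rpow_mul_lintegral_uIoc_le hq (hh.comp (measurable_const_add y))
          (by norm_num)
    _ = _ := by
        congr 1
        exact setLIntegral_congr_fun measurableSet_Ioc fun s hs => by rw [hdist s hs]

end Hardy

section Curve

variable {n : ℕ} {u : ℝ → EuclideanSpace ℝ (Fin n)}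

lemma enorm_deriv_le_linfD (x : ℝ) : ‖deriv u x‖ₑ ≤ linfD u :=
  le_iSup (fun x => (‖deriv u x‖₊ : ℝ≥0∞)) x

lemma enorm_sub_rpow_neg_le_bil {x y : ℝ} (hd : circDist x y ≠ 0) {p : ℝ} (hp : 0 ≤ p) :
    ‖u x - u y‖ₑ ^ (-p) ≤ bil u ^ p * ENNReal.ofReal (circDist x y) ^ (-p) := by
  set D := ENNReal.ofReal (circDist x y)
  have hD : D ≠ 0 :=
    ENNReal.ofReal_ne_zero_iff.2 ((norm_nonneg _ : 0 ≤ circDist x y).lt_of_ne' hd)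
  have hbil : D / ‖u x - u y‖ₑ ≤ bil u := by
    rw [← ofReal_norm]
    exact le_iSup₂_of_le x y (le_iSup_of_le hd le_rfl)
  have hinv : ‖u x - u y‖ₑ⁻¹ ≤ bil u * D⁻¹ := by
    calc ‖u x - u y‖ₑ⁻¹ = D / ‖u x - u y‖ₑ * D⁻¹ := by
          rw [div_eq_mul_inv, mul_comm D, mul_assoc,
            ENNReal.mul_inv_cancel hD ENNReal.ofReal_ne_top, mul_one]
      _ ≤ bil u * D⁻¹ := by gcongr
  calc ‖u x - u y‖ₑ ^ (-p) = ‖u x - u y‖ₑ⁻¹ ^ p := by rw [ENNReal.rpow_neg, ENNReal.inv_rpow]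
    _ ≤ (bil u * D⁻¹) ^ p := by gcongr
    _ = bil u ^ p * D ^ (-p) := by
        rw [ENNReal.mul_rpow_of_nonneg _ _ hp, ENNReal.inv_rpow, ENNReal.rpow_neg]

lemma tp_integrand_le (hu : ContDiff ℝ 1 u) (hper : Function.Periodic u 1) {q : ℝ} (hq : 1 < q)
    (x y : ℝ) :
    ENNReal.ofReal (wedgeSq (deriv u y) (u x - u y) ^ (q / 2) / ‖u x - u y‖ ^ (2 * q)) ≤
      bil u ^ (2 * q) * linfD u ^ q * (ENNReal.ofReal (circDist x y) ^ (-(q + 1)) *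
        ∫⁻ t in Ι y (y + wrap (x - y)), ‖deriv u t - deriv u y‖ₑ ^ q) := by
  by_cases hxy : u x = u y
  · -- the integrand is `0 / 0 = 0` here
    simp [hxy, Real.zero_rpow (by positivity : 2 * q ≠ 0)]
  have hd : circDist x y ≠ 0 := fun h => hxy (hper.eq_of_circDist_eq_zero h)
  set D := ENNReal.ofReal (circDist x y)
  set s := wrap (x - y)
  set I := ∫⁻ t in Ι y (y + s), ‖deriv u t - deriv u y‖ₑ ^ q
  have hD : D ≠ 0 :=
    ENNReal.ofReal_ne_zero_iff.2 ((norm_nonneg _ : 0 ≤ circDist x y).lt_of_ne' hd)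
  have htaylor : ‖u x - u y - s • deriv u y‖ₑ ^ q ≤ D ^ (q - 1) * I := by
    have h := enorm_sub_sub_smul_deriv_rpow_le hu hq (y + s) y
    rwa [hper.apply_add_wrap_sub, add_sub_cancel_left, Real.enorm_eq_ofReal_abs,
      ← circDist_eq_abs_wrap] at h
  have hwedge : ENNReal.ofReal (wedgeSq (deriv u y) (u x - u y) ^ (q / 2)) ≤
      linfD u ^ q * ‖u x - u y - s • deriv u y‖ₑ ^ q := by
    calc ENNReal.ofReal (wedgeSq (deriv u y) (u x - u y) ^ (q / 2))
        ≤ ENNReal.ofReal ((‖deriv u y‖ * ‖u x - u y - s • deriv u y‖) ^ q) := by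
          gcongr; exact wedgeSq_rpow_le _ _ s (by positivity)
      _ = ‖deriv u y‖ₑ ^ q * ‖u x - u y - s • deriv u y‖ₑ ^ q := by
          rw [Real.mul_rpow (by positivity) (by positivity), ENNReal.ofReal_mul (by positivity),
            ← ENNReal.ofReal_rpow_of_nonneg (by positivity) (by positivity),
            ← ENNReal.ofReal_rpow_of_nonneg (by positivity) (by positivity), ofReal_norm,
            ofReal_norm]
      _ ≤ linfD u ^ q * ‖u x - u y - s • deriv u y‖ₑ ^ q := by
          gcongr; exact enorm_deriv_le_linfD y
  calc ENNReal.ofReal (wedgeSq (deriv u y) (u x - u y) ^ (q / 2) / ‖u x - u y‖ ^ (2 * q))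
      = ENNReal.ofReal (wedgeSq (deriv u y) (u x - u y) ^ (q / 2)) * ‖u x - u y‖ₑ ^ (-(2 * q)) := by
        have hb : 0 < ‖u x - u y‖ := norm_pos_iff.2 (sub_ne_zero.2 hxy)
        rw [ENNReal.ofReal_div_of_pos (Real.rpow_pos_of_pos hb _), div_eq_mul_inv,
          ← ENNReal.ofReal_rpow_of_pos hb, ofReal_norm, ENNReal.rpow_neg]
    _ ≤ linfD u ^ q * (D ^ (q - 1) * I) * (bil u ^ (2 * q) * D ^ (-(2 * q))) := by
        gcongr
        · exact hwedge.trans (by gcongr)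
        · exact enorm_sub_rpow_neg_le_bil hd (by positivity)
    _ = bil u ^ (2 * q) * linfD u ^ q * ((D ^ (q - 1) * D ^ (-(2 * q))) * I) := by ring
    _ = bil u ^ (2 * q) * linfD u ^ q * (D ^ (-(q + 1)) * I) := by
        rw [← ENNReal.rpow_add _ _ hD ENNReal.ofReal_ne_top]; ring_nf

lemma lintegral_tp_integrand_le (hu : ContDiff ℝ 1 u) (hper : Function.Periodic u 1) {q : ℝ}
    (hq : 1 < q) (y : ℝ) :
    ∫⁻ x in Ioc 0 1,
        ENNReal.ofReal (wedgeSq (deriv u y) (u x - u y) ^ (q / 2) / ‖u x - u y‖ ^ (2 * q)) ≤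
      ∫⁻ x in Ioc 0 1, bil u ^ (2 * q) * linfD u ^ q *
        ENNReal.ofReal (‖deriv u x - deriv u y‖ ^ q / circDist x y ^ q) := by
  set K := bil u ^ (2 * q) * linfD u ^ q
  set h : ℝ → ℝ≥0∞ := fun t => K * ‖deriv u t - deriv u y‖ₑ ^ q
  have hu' : Measurable (deriv u) := (hu.continuous_deriv le_rfl).measurable
  have hh : Measurable h := by fun_prop
  have hhper : Function.Periodic h 1 := fun t => by simp only [h, hper.deriv t]
  calc ∫⁻ x in Ioc 0 1,
        ENNReal.ofReal (wedgeSq (deriv u y) (u x - u y) ^ (q / 2) / ‖u x - u y‖ ^ (2 * q))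
      ≤ ∫⁻ x in Ioc 0 1, ENNReal.ofReal (circDist x y) ^ (-(q + 1)) *
          ∫⁻ t in Ι y (y + wrap (x - y)), h t := by
        refine lintegral_mono fun x => (tp_integrand_le hu hper hq x y).trans_eq ?_
        rw [lintegral_const_mul _ (by fun_prop)]
        ring
    _ ≤ ENNReal.ofReal q⁻¹ * ∫⁻ x in Ioc 0 1, ENNReal.ofReal (circDist x y) ^ (-q) * h x :=
        lintegral_circDist_rpow_mul_lintegral_le (by positivity) hh hhper y
    _ ≤ ∫⁻ x in Ioc 0 1, ENNReal.ofReal (circDist x y) ^ (-q) * h x :=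
        mul_le_of_le_one_left' (ENNReal.ofReal_le_one.2 (inv_le_one_of_one_le₀ hq.le))
    _ = _ := by
        refine lintegral_congr fun x => ?_
        rcases (show 0 ≤ circDist x y from norm_nonneg _).eq_or_lt with hd | hd
        · have hq0 : 0 < q := by linarith
          simp [h, hper.deriv.eq_of_circDist_eq_zero hd.symm, Real.zero_rpow hq0.ne',
            ENNReal.zero_rpow_of_pos hq0]
        · rw [ENNReal.ofReal_div_of_pos (Real.rpow_pos_of_pos hd q),
            ← ENNReal.ofReal_rpow_of_nonneg (norm_nonneg _) (by positivity), ofReal_norm,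
            ← ENNReal.ofReal_rpow_of_pos hd, div_eq_mul_inv, ← ENNReal.rpow_neg]
          ring

end Curve

lemma lintegral_unitSq_eq {F : ℝ × ℝ → ℝ≥0∞} (hF : Measurable F) :
    ∫⁻ p in unitSq, F p = ∫⁻ y in Ioc 0 1, ∫⁻ x in Ioc 0 1, F (x, y) := by
  rw [unitSq, Measure.volume_eq_prod, ← Measure.prod_restrict,
    lintegral_prod_symm _ hF.aemeasurable]

theorem tp_energy_estimate_general (n : ℕ) (q : ℝ) (hq : 2 < q)
    (u : ℝ → EuclideanSpace ℝ (Fin n))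
    (hC1 : ContDiff ℝ 1 u) (hper : Function.Periodic u 1) :
    TPe q u ≤ ENNReal.ofReal (1 / q) * bil u ^ (2 * q) * linfD u ^ q *
      sobSemPow (1 - 1 / q) q (deriv u) := by
  have hu := hC1.continuous
  have hu' := hC1.continuous_deriv le_rfl
  have hdist := continuous_circDist
  have hTP : Measurable fun p : ℝ × ℝ => ENNReal.ofReal
      (wedgeSq (deriv u p.2) (u p.1 - u p.2) ^ (q / 2) / ‖u p.1 - u p.2‖ ^ (2 * q)) := by
    unfold wedgeSq; fun_prop
  have hsob : Measurable fun p : ℝ × ℝ =>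
      ENNReal.ofReal (‖deriv u p.1 - deriv u p.2‖ ^ q / circDist p.1 p.2 ^ q) := by
    fun_prop
  have hexp : 1 + (1 - 1 / q) * q = q := by field_simp; ring
  calc TPe q u
      = ENNReal.ofReal (1 / q) * ∫⁻ y in Ioc 0 1, ∫⁻ x in Ioc 0 1,
          ENNReal.ofReal (wedgeSq (deriv u y) (u x - u y) ^ (q / 2) / ‖u x - u y‖ ^ (2 * q)) := by
        rw [TPe, lintegral_unitSq_eq hTP]
    _ ≤ ENNReal.ofReal (1 / q) * ∫⁻ y in Ioc 0 1, ∫⁻ x in Ioc 0 1, bil u ^ (2 * q) * linfD u ^ q *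
          ENNReal.ofReal (‖deriv u x - deriv u y‖ ^ q / circDist x y ^ q) := by
        gcongr _ * ?_
        exact lintegral_mono fun y => lintegral_tp_integrand_le hC1 hper (by linarith) y
    _ = _ := by
        rw [← lintegral_unitSq_eq (hsob.const_mul _), lintegral_const_mul _ hsob, sobSemPow, hexp]
        ring

/-- Energy estimate, Proposition 3.2 / eq. (3.4):
`TP(u) ≤ (1/q) (bil u)^{2q} ‖u'‖_{L^∞}^q [u']_{W^{1-1/q,q}}^q`. -/
theorem tp_energy_estimate (n : ℕ) (q : ℝ) (hq : 2 < q)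
    (u : ℝ → EuclideanSpace ℝ (Fin n))
    (hC1 : ContDiff ℝ 1 u) (hper : Function.Periodic u 1)
    (hemb : Embedded u) (hreg : Regular u)
    (hbil : bil u < ⊤) (hsem : sobSemPow (1 - 1 / q) q (deriv u) < ⊤) :
    TPe q u ≤ ENNReal.ofReal (1 / q) * bil u ^ (2 * q) * linfD u ^ q *
      sobSemPow (1 - 1 / q) q (deriv u) :=
  tp_energy_estimate_general n q hq u hC1 hper
end
end

section
/- Let q ≥ 1 and let g : ℝ/ℤ → ℝⁿ be measurable. Then ∫₀¹ ∫_{ℝ/ℤ} ∫_{-1/2}^{1/2} |g(y+θz) − g(y)|^q / |z|^q dz dy dθ ≤ ∫_{ℝ/ℤ} ∫_{-1/2}^{1/2} |g(y+z) − g(y)|^q / |z|^q dz dy, i.e. the θ-averaged difference quotient integral is bounded by the Sobolev–Slobodeckiĭ seminorm [g]_{W^{1-1/q,q}}^q. -/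
open MeasureTheory Set Filter
open scoped RealInnerProductSpace ENNReal Topology

noncomputable section

/-!
Substituting `w = θ z` turns the inner integral at scale `θ ∈ (0, 1]` into `θ ^ (q - 1)` times the
same integral of `‖g (y + w) - g y‖ ^ q / |w| ^ q` over the shrunken interval `(-θ/2, θ/2]`; since
`q ≥ 1` this is at most the integral over `(-1/2, 1/2]`, for every `y` and `θ`, and averaging over
`θ ∈ (0, 1]` preserves the bound.
-/

lemma setLIntegral_comp_const_mul_Ioc {θ : ℝ} (hθ : 0 < θ) (F : ℝ → ℝ≥0∞) (a b : ℝ) :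
    ∫⁻ z in Ioc a b, F (θ * z) = ENNReal.ofReal θ⁻¹ * ∫⁻ w in Ioc (θ * a) (θ * b), F w := by
  have hemb : MeasurableEmbedding (θ * ·) := (Homeomorph.mulLeft₀ θ hθ.ne').measurableEmbedding
  have hpre : (θ * ·) ⁻¹' Ioc (θ * a) (θ * b) = Ioc a b := by
    rw [preimage_const_mul_Ioc₀ _ _ hθ, mul_div_cancel_left₀ _ hθ.ne',
      mul_div_cancel_left₀ _ hθ.ne']
  rw [← hpre, ← hemb.lintegral_map, ← hemb.restrict_map, Real.map_volume_mul_left hθ.ne',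
    Measure.restrict_smul, lintegral_smul_measure, abs_of_pos (inv_pos.mpr hθ), smul_eq_mul]

lemma ofReal_div_abs_rpow_eq_mul {θ : ℝ} (hθ : 0 < θ) (q x z : ℝ) :
    ENNReal.ofReal (x / |z| ^ q) = ENNReal.ofReal (θ ^ q) * ENNReal.ofReal (x / |θ * z| ^ q) := by
  have hθq : 0 < θ ^ q := Real.rpow_pos_of_pos hθ q
  rw [← ENNReal.ofReal_mul hθq.le, abs_mul, Real.mul_rpow (abs_nonneg θ) (abs_nonneg z),
    abs_of_pos hθ, ← mul_div_assoc, mul_div_mul_left _ _ hθq.ne']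

lemma Ioc_neg_const_mul_subset {θ : ℝ} (hθ : θ ∈ Ioc (0 : ℝ) 1) (r : ℝ) :
    Ioc (θ * -r) (θ * r) ⊆ Ioc (-r) r := by
  obtain ⟨hθ0, hθ1⟩ := hθ
  rintro x ⟨hlo, hhi⟩
  have hr : 0 < r := by nlinarith
  constructor <;> nlinarith

lemma setLIntegral_div_abs_rpow_comp_const_mul_le {q θ : ℝ} (hq : 1 ≤ q) (hθ : θ ∈ Ioc (0 : ℝ) 1)
    (f : ℝ → ℝ) (r : ℝ) :
    ∫⁻ z in Ioc (-r) r, ENNReal.ofReal (f (θ * z) / |z| ^ q) ≤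
      ∫⁻ z in Ioc (-r) r, ENNReal.ofReal (f z / |z| ^ q) := by
  obtain ⟨hθ0, hθ1⟩ := hθ
  set F : ℝ → ℝ≥0∞ := fun w => ENNReal.ofReal (f w / |w| ^ q)
  have hθ_pow : ENNReal.ofReal (θ ^ q) * ENNReal.ofReal θ⁻¹ = ENNReal.ofReal (θ ^ (q - 1)) := by
    rw [← ENNReal.ofReal_mul (Real.rpow_pos_of_pos hθ0 q).le, ← Real.rpow_neg_one θ,
      ← Real.rpow_add hθ0, sub_eq_add_neg]
  calc ∫⁻ z in Ioc (-r) r, ENNReal.ofReal (f (θ * z) / |z| ^ q)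
      = ∫⁻ z in Ioc (-r) r, ENNReal.ofReal (θ ^ q) * F (θ * z) := by
        simp_rw [F, ← ofReal_div_abs_rpow_eq_mul hθ0]
    _ = ENNReal.ofReal (θ ^ q) * (ENNReal.ofReal θ⁻¹ * ∫⁻ w in Ioc (θ * -r) (θ * r), F w) := by
        rw [lintegral_const_mul' _ _ ENNReal.ofReal_ne_top,
          setLIntegral_comp_const_mul_Ioc hθ0]
    _ ≤ ENNReal.ofReal (θ ^ (q - 1)) * ∫⁻ w in Ioc (-r) r, F w := by
        rw [← mul_assoc, hθ_pow]
        exact mul_le_mul_right (lintegral_mono_set (Ioc_neg_const_mul_subset ⟨hθ0, hθ1⟩ r)) _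
    _ ≤ ∫⁻ w in Ioc (-r) r, F w :=
        mul_le_of_le_one_left' (ENNReal.ofReal_le_one.mpr
          (Real.rpow_le_one hθ0.le hθ1 (by linarith)))

theorem averaged_difference_quotient_bound_general (n : ℕ) (q : ℝ) (hq : 1 ≤ q)
    (g : ℝ → EuclideanSpace ℝ (Fin n)) :
    (∫⁻ θ in Ioc (0 : ℝ) 1, ∫⁻ y in Ioc (0 : ℝ) 1, ∫⁻ z in Ioc (-(1/2) : ℝ) (1/2),
        ENNReal.ofReal (‖g (y + θ * z) - g y‖ ^ q / |z| ^ q)) ≤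
      ∫⁻ y in Ioc (0 : ℝ) 1, ∫⁻ z in Ioc (-(1/2) : ℝ) (1/2),
        ENNReal.ofReal (‖g (y + z) - g y‖ ^ q / |z| ^ q) := by
  calc _ ≤ ∫⁻ _ in Ioc (0 : ℝ) 1, ∫⁻ y in Ioc (0 : ℝ) 1, ∫⁻ z in Ioc (-(1/2) : ℝ) (1/2),
          ENNReal.ofReal (‖g (y + z) - g y‖ ^ q / |z| ^ q) :=
        setLIntegral_mono' measurableSet_Ioc fun θ hθ => lintegral_mono fun y =>
          setLIntegral_div_abs_rpow_comp_const_mul_le hq hθ (fun w => ‖g (y + w) - g y‖ ^ q) _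
    _ = _ := by rw [setLIntegral_const, Real.volume_Ioc, sub_zero, ENNReal.ofReal_one, mul_one]

/-- Jensen–Fubini estimate: the θ-averaged difference quotient
integral is bounded by the Sobolev–Slobodeckii seminorm `[g]_{W^{1-1/q,q}}^q`. -/
theorem averaged_difference_quotient_bound (n : ℕ) (q : ℝ) (hq : 1 ≤ q)
    (g : ℝ → EuclideanSpace ℝ (Fin n)) (hmeas : Measurable g)
    (hper : Function.Periodic g 1) :
    (∫⁻ θ in Ioc (0 : ℝ) 1, ∫⁻ y in Ioc (0 : ℝ) 1, ∫⁻ z in Ioc (-(1/2) : ℝ) (1/2),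
        ENNReal.ofReal (‖g (y + θ * z) - g y‖ ^ q / |z| ^ q)) ≤
      ∫⁻ y in Ioc (0 : ℝ) 1, ∫⁻ z in Ioc (-(1/2) : ℝ) (1/2),
        ENNReal.ofReal (‖g (y + z) - g y‖ ^ q / |z| ^ q) :=
  averaged_difference_quotient_bound_general n q hq g
end
end

section
/- Let u⁰, u¹, …, u^K : ℝ/ℤ → ℝ³ be C¹ curves such that the linearized arclength condition (u^k − u^{k−1})'(x) · (u^{k−1})'(x) = 0 holds for all x ∈ ℝ/ℤ and all k = 1, …, K. Then for every k and every x, |(u^k)'(x)|² = |(u⁰)'(x)|² + Σ_{ℓ=1}^{k} |(u^ℓ − u^{ℓ−1})'(x)|². In particular, if |(u⁰)'| ≡ 1 then |(u^k)'(x)| ≥ 1 for all k and x. -/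
open MeasureTheory Set Filter
open scoped RealInnerProductSpace ENNReal Topology

noncomputable section

/-- maintenance of the arclength condition: under the pointwise
linearized arclength constraints `(u^k - u^{k-1})' ⟂ (u^{k-1})'` one has
`|(u^k)'|² = |(u⁰)'|² + Σ_{ℓ=1}^k |(u^ℓ - u^{ℓ-1})'|²`; in particular `|(u^k)'| ≥ 1`
if `|(u⁰)'| ≡ 1`. -/
theorem linearized_arclength_identity (K : ℕ) (u : ℕ → ℝ → EuclideanSpace ℝ (Fin 3))
    (hC1 : ∀ k ≤ K, ContDiff ℝ 1 (u k))
    (hper : ∀ k ≤ K, Function.Periodic (u k) 1)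
    (horth : ∀ k, 1 ≤ k → k ≤ K → ∀ x : ℝ,
      ⟪deriv (u k) x - deriv (u (k - 1)) x, deriv (u (k - 1)) x⟫ = 0) :
    ∀ k ≤ K, ∀ x : ℝ,
      ‖deriv (u k) x‖ ^ 2 = ‖deriv (u 0) x‖ ^ 2 +
          ∑ ℓ ∈ Finset.Icc 1 k, ‖deriv (u ℓ) x - deriv (u (ℓ - 1)) x‖ ^ 2 ∧
      ((∀ y : ℝ, ‖deriv (u 0) y‖ = 1) → 1 ≤ ‖deriv (u k) x‖) := by

  intro k
  induction k with
  | zero =>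
    intro _ x
    refine ⟨by simp, fun h => by rw [h x]⟩
  | succ k ih =>
    intro hK x
    have hk : k ≤ K := Nat.le_of_succ_le hK
    obtain ⟨hsq, _⟩ := ih hk x
    have horth' := horth (k + 1) (Nat.le_add_left 1 k) hK x
    simp only [Nat.add_sub_cancel] at horth'
    have key : ‖deriv (u (k + 1)) x‖ ^ 2 =
        ‖deriv (u k) x‖ ^ 2 + ‖deriv (u (k + 1)) x - deriv (u k) x‖ ^ 2 := by
      have hk2 := norm_add_sq_real (deriv (u k) x) (deriv (u (k + 1)) x - deriv (u k) x)
      rw [real_inner_comm] at horth'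
      rw [horth'] at hk2
      simpa using hk2
    have hsum : ∑ ℓ ∈ Finset.Icc 1 (k + 1), ‖deriv (u ℓ) x - deriv (u (ℓ - 1)) x‖ ^ 2 =
        (∑ ℓ ∈ Finset.Icc 1 k, ‖deriv (u ℓ) x - deriv (u (ℓ - 1)) x‖ ^ 2) +
          ‖deriv (u (k + 1)) x - deriv (u k) x‖ ^ 2 := by
      rw [Finset.sum_Icc_succ_top (Nat.le_add_left 1 k)]
      simp
    have hmain : ‖deriv (u (k + 1)) x‖ ^ 2 = ‖deriv (u 0) x‖ ^ 2 +
        ∑ ℓ ∈ Finset.Icc 1 (k + 1), ‖deriv (u ℓ) x - deriv (u (ℓ - 1)) x‖ ^ 2 := by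
      rw [key, hsq, hsum]; ring
    refine ⟨hmain, fun h => ?_⟩
    have h1 : (1 : ℝ) ≤ ‖deriv (u (k + 1)) x‖ ^ 2 := by
      rw [hmain, h x]
      have : (0 : ℝ) ≤ ∑ ℓ ∈ Finset.Icc 1 (k + 1), ‖deriv (u ℓ) x - deriv (u (ℓ - 1)) x‖ ^ 2 :=
        Finset.sum_nonneg fun _ _ => sq_nonneg _
      nlinarith
    nlinarith [norm_nonneg (deriv (u (k + 1)) x)]
end
end
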